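/- arXiv:1005.1272 — 3 statements merged into one kernel-verified Lean document; each statement's English description precedes it below -/
import Mathlib

section
/- With g, v, w, z as above and p(x) := (1/2)(ad x)^2(v), q(x) := (1/6)(ad x)^3(v) for x ∈ g_{-1}, and the symplectic form ⟨a,b⟩w = [a,b]: for all x, a ∈ g_{-1}, q(x,x,a) = (1/3)[a, p(x)] + (1/6)⟨a,x⟩ x, where q(x,x,a) denotes the polarization (directional derivative: q(x,x,a) = (1/3) d/dt|_{t=0} q(x+ta)). -/
/-- With `g, v, w, z` as in the length-5 graded setup, `p(x) = (1/2)(ad x)²(v)`,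
`q(x) = (1/6)(ad x)³(v)` for `x ∈ g_{-1}`, and the symplectic form `⟨a, b⟩ • w = [a, b]`:
for all `x, a ∈ g_{-1}`,
`q(x, x, a) = (1/3)[a, p(x)] + (1/6)⟨a, x⟩ • x`,
where `q(x, x, a)` is the symmetric trilinear polarization of `q`, i.e.
`q(x, x, a) = (1/3) d/dt|₀ q(x + t a) = (1/18)([a,[x,[x,v]]] + [x,[a,[x,v]]] + [x,[x,[a,v]]])`. -/
theorem statement_8 {k L : Type*} [Field k] [CharZero k] [LieRing L] [LieAlgebra k L]
    (g : ℤ → Submodule k L)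
    (hbracket : ∀ i j : ℤ, ∀ x ∈ g i, ∀ y ∈ g j, ⁅x, y⁆ ∈ g (i + j))
    (hlen : ∀ n : ℤ, 2 < |n| → g n = ⊥)
    (v w : L) (hv : v ∈ g 2) (hw : w ∈ g (-2)) (hvne : v ≠ 0) (hwne : w ≠ 0)
    (hspanv : ∀ u ∈ g 2, ∃ t : k, u = t • v)
    (hspanw : ∀ u ∈ g (-2), ∃ t : k, u = t • w)
    (hgrading : ∀ n : ℤ, ∀ x ∈ g n, ⁅⁅v, w⁆, x⁆ = (n : k) • x)
    (B : L → L → k)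
    (hB : ∀ a ∈ g (-1), ∀ b ∈ g (-1), ⁅a, b⁆ = B a b • w) :
    ∀ x ∈ g (-1), ∀ a ∈ g (-1),
      (1 / 18 : k) • (⁅a, ⁅x, ⁅x, v⁆⁆⁆ + ⁅x, ⁅a, ⁅x, v⁆⁆⁆ + ⁅x, ⁅x, ⁅a, v⁆⁆⁆)
        = (1 / 3 : k) • ⁅a, (1 / 2 : k) • ⁅x, ⁅x, v⁆⁆⁆ + ((1 / 6 : k) * B a x) • x := by
  intro x hx a ha
  -- ⁅w, x⁆ = 0 since it lives in g (-3) = ⊥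
  have hwx : ⁅w, x⁆ = (0 : L) := by
    have h := hbracket (-2) (-1) w hw x hx
    rw [show (-2 + -1 : ℤ) = -3 by norm_num, hlen (-3) (by norm_num),
      Submodule.mem_bot] at h
    exact h
  -- grading element acting on g (-1)
  have hzx : ∀ y ∈ g (-1), ⁅⁅v, w⁆, y⁆ = -y := by
    intro y hy
    have := hgrading (-1) y hy
    simpa using this
  have hax : ⁅a, x⁆ = B a x • w := hB a ha x hx
  -- ⁅w, ⁅x, v⁆⁆ = -x
  have e1 : ⁅w, ⁅x, v⁆⁆ = -x := by
    rw [leibniz_lie, hwx, zero_lie, zero_add, ← lie_skew w v, lie_neg,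
      ← lie_skew x ⁅v, w⁆, hzx x hx, neg_neg]
  -- T1 = T2 - B a x • x
  have hT1 : ⁅a, ⁅x, ⁅x, v⁆⁆⁆ = ⁅x, ⁅a, ⁅x, v⁆⁆⁆ - B a x • x := by
    rw [leibniz_lie, hax, smul_lie, e1, smul_neg]
    abel
  -- T3 = T2 + B a x • x  (via inner bracket)
  have hT3 : ⁅x, ⁅x, ⁅a, v⁆⁆⁆ = ⁅x, ⁅a, ⁅x, v⁆⁆⁆ + B a x • x := by
    have inner : ⁅a, ⁅x, v⁆⁆ = ⁅⁅a, x⁆, v⁆ + ⁅x, ⁅a, v⁆⁆ := leibniz_lie a x v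
    rw [inner, lie_add, hax, smul_lie, lie_smul, ← lie_skew w v, lie_neg,
      ← lie_skew x ⁅v, w⁆, hzx x hx]
    module
  rw [lie_smul, hT1, hT3]
  module
end

section
/- In the lattice Pic X' = ℤ ⟨χ_0⟩ ⊕ (lattice of E7 weights) of a degree-2 del Pezzo surface, with exceptional classes ℓ_μ indexed by the 56 weights μ of the minuscule E7-representation and intersection numbers (ℓ_μ · ℓ_ν) = 1/2 − (μ, ν): for any weight ξ of the adjoint representation of E7 (i.e., any E7 root) with ξ ≠ 0, there exist weights μ, ν of the 56-dimensional representation with ξ = μ + ν and (ℓ_μ · ℓ_ν) = 1, i.e., (μ, ν) = −1/2. -/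
open scoped RealInnerProductSpace Classical

/-- The root system of type `E8` in the standard model inside `ℝ⁸`: the vectors `±eᵢ ± eⱼ`
(`i ≠ j`, i.e. integer vectors with exactly two nonzero coordinates equal to `±1`) together with
the vectors `(±1/2, …, ±1/2)` with an even number of minus signs. -/
def IsE8Root (x : EuclideanSpace ℝ (Fin 8)) : Prop :=
  ((∀ i, x i = 1 ∨ x i = -1 ∨ x i = 0) ∧
      (Finset.univ.filter fun i => x i ≠ 0).card = 2) ∨
  ((∀ i, x i = 1 / 2 ∨ x i = -1 / 2) ∧
      Even (Finset.univ.filter fun i => x i = -1 / 2).card)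

/-- The vector `δ = e₇ + e₈`, an `E8` root.  The roots orthogonal to `δ` form a root system of
type `E7`; the roots `β` with `(β, δ) = −1` project (via `β ↦ β + δ/2`) onto the 56 weights of
the minuscule representation of `E7`, of norm `3/2`. -/
noncomputable def deltaE8 : EuclideanSpace ℝ (Fin 8) :=
  EuclideanSpace.single 6 1 + EuclideanSpace.single 7 1

/-!
Write `δ = deltaE8 = e₆ + e₇` (indices from `0`). It suffices to find an `E8` root `β` with
`(β, δ) = -1` and `(β, ξ) = 1` for which `γ = ξ - δ - β` is again a root: then `(γ, δ) = -1` and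
`(β, γ) = 1 + 1 - 2 = 0`, so the weights `β + δ/2` and `γ + δ/2` sum to `ξ` and have inner
product `0 - 1/2 - 1/2 + 1/2 = -1/2`. One can always take `β = a eₚ - eₜ` with `p ∉ {6, 7}` and
`t ∈ {6, 7}`: for `ξ = a eᵢ + b eⱼ` supported off `{6, 7}`, `β = a eᵢ - e₇`; for
`ξ = e_{t'} - eₜ` with `{t, t'} = {6, 7}`, `β = e₀ - eₜ`; for a half-integral `ξ` with
`ξₜ = -1/2`, `β = -eₚ - eₜ` where `ξₚ = -1/2` (such `p` exists since the number of minus signs is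
even), and then `γ` is `ξ` with the signs at `p` and `t'` flipped.
-/

section InnerProductSpace

variable {E : Type*} [NormedAddCommGroup E] [InnerProductSpace ℝ E] {ξ δ β : E}

lemma inner_sub_sub_left_eq_neg_one (hδ : ⟪δ, δ⟫ = 2) (hξ : ⟪ξ, δ⟫ = 0) (hβ : ⟪β, δ⟫ = -1) :
    ⟪ξ - δ - β, δ⟫ = -1 := by
  rw [inner_sub_left, inner_sub_left]
  linarith

lemma inner_add_half_smul_sub_sub_add_half_smul (hδ : ⟪δ, δ⟫ = 2) (hξ : ⟪ξ, δ⟫ = 0)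
    (hβ : ⟪β, β⟫ = 2) (hβδ : ⟪β, δ⟫ = -1) (hβξ : ⟪β, ξ⟫ = 1) :
    ⟪β + (1 / 2 : ℝ) • δ, ξ - δ - β + (1 / 2 : ℝ) • δ⟫ = -(1 / 2) := by
  have hβγ : ⟪β, ξ - δ - β⟫ = 0 := by
    rw [inner_sub_right, inner_sub_right, hβξ, hβδ, hβ]
    norm_num
  have hδγ : ⟪δ, ξ - δ - β⟫ = -1 := by
    rw [real_inner_comm, inner_sub_sub_left_eq_neg_one hδ hξ hβδ]
  simp only [inner_add_left, inner_add_right, real_inner_smul_left, real_inner_smul_right]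
  rw [hβγ, hδγ, hβδ, hδ]
  norm_num

end InnerProductSpace

open EuclideanSpace

lemma inner_deltaE8 (y : EuclideanSpace ℝ (Fin 8)) : ⟪y, deltaE8⟫ = y 6 + y 7 := by
  simp [deltaE8, inner_add_right, inner_single_right]

lemma inner_deltaE8_self : ⟪deltaE8, deltaE8⟫ = 2 := by
  rw [inner_deltaE8]
  norm_num [deltaE8, Fin.ext_iff]

lemma IsE8Root.inner_self {x : EuclideanSpace ℝ (Fin 8)} (hx : IsE8Root x) : ⟪x, x⟫ = 2 := by
  rw [real_inner_self_eq_norm_sq, EuclideanSpace.norm_sq_eq]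
  rcases hx with ⟨hcoord, hcard⟩ | ⟨hcoord, -⟩
  · have hsq : ∀ k, ‖x k‖ ^ 2 = if x k ≠ 0 then 1 else 0 := fun k => by
      rcases hcoord k with h | h | h <;> simp [h]
    simp only [hsq, Finset.sum_boole, hcard]
    norm_num
  · have hsq : ∀ k, ‖x k‖ ^ 2 = 1 / 4 := fun k => by
      rcases hcoord k with h | h <;> norm_num [h]
    simp only [hsq, Finset.sum_const, Finset.card_univ, Fintype.card_fin]
    norm_num

lemma eq_single_add_single_of_support {n : ℕ} {x : EuclideanSpace ℝ (Fin n)} {i j : Fin n}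
    (hij : i ≠ j) (hx : ∀ k, x k ≠ 0 → k = i ∨ k = j) :
    x = single i (x i) + single j (x j) := by
  ext k
  by_cases hki : k = i
  · subst hki; simp [hij]
  by_cases hkj : k = j
  · subst hkj; simp [hki]
  have hxk : x k = 0 := by_contra fun h => (hx k h).elim hki hkj
  simp [hki, hkj, hxk]

lemma isE8Root_single_add_single {i j : Fin 8} (hij : i ≠ j) {a b : ℝ} (ha : a = 1 ∨ a = -1)
    (hb : b = 1 ∨ b = -1) : IsE8Root (single i a + single j b) := by
  have ha0 : a ≠ 0 := by rcases ha with rfl | rfl <;> norm_num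
  have hb0 : b ≠ 0 := by rcases hb with rfl | rfl <;> norm_num
  refine Or.inl ⟨fun k => ?_, ?_⟩
  · by_cases hki : k = i
    · subst hki; simpa [hij] using ha.imp_right Or.inl
    by_cases hkj : k = j
    · subst hkj; simpa [hki] using hb.imp_right Or.inl
    simp [hki, hkj]
  · have : (Finset.univ.filter fun k => (single i a + single j b) k ≠ 0) = {i, j} := by
      ext k
      by_cases hki : k = i
      · subst hki; simp [hij, ha0]
      by_cases hkj : k = j
      · subst hkj; simp [hki, hb0]
      simp [hki, hkj]
    rw [this, Finset.card_pair hij]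

lemma isE8Root_add_single_sub_single {x : EuclideanSpace ℝ (Fin 8)}
    (hcoord : ∀ k, x k = 1 / 2 ∨ x k = -1 / 2)
    (heven : Even (Finset.univ.filter fun k => x k = -1 / 2).card) {i j : Fin 8}
    (hi : x i = -1 / 2) (hj : x j = 1 / 2) : IsE8Root (x + single i 1 - single j 1) := by
  have hij : i ≠ j := by rintro rfl; linarith
  refine Or.inr ⟨fun k => ?_, ?_⟩
  · by_cases hki : k = i
    · subst hki; norm_num [hij, hi]
    by_cases hkj : k = j
    · subst hkj; norm_num [hki, hj]
    simpa [hki, hkj] using hcoord k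
  · set S := Finset.univ.filter fun k => x k = -1 / 2
    have hiS : i ∈ S := by simp [S, hi]
    have hjS : j ∉ S.erase i := by norm_num [S, hj]
    have : (Finset.univ.filter fun k =>
        (x + single i 1 - single j 1 : EuclideanSpace ℝ (Fin 8)) k = -1 / 2) =
          insert j (S.erase i) := by
      ext k
      by_cases hki : k = i
      · subst hki; simp [S, hij, hi]
      by_cases hkj : k = j
      · subst hkj; norm_num [S, hki, hj]
      simp [S, hki, hkj]
    rwa [this, Finset.card_insert_of_notMem hjS, Finset.card_erase_add_one hiS]

lemma exists_ne_eq_neg_half {x : EuclideanSpace ℝ (Fin 8)}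
    (heven : Even (Finset.univ.filter fun k => x k = -1 / 2).card) {t : Fin 8}
    (ht : x t = -1 / 2) : ∃ p ≠ t, x p = -1 / 2 := by
  set S := Finset.univ.filter fun k => x k = -1 / 2
  have htS : t ∈ S := by simp [S, ht]
  have hS : 1 < S.card := by
    rcases Nat.even_iff.mp heven with h
    have := Finset.card_pos.mpr ⟨t, htS⟩
    omega
  obtain ⟨p, hpS, hpt⟩ := Finset.exists_mem_ne hS t
  exact ⟨p, hpt, by simpa [S] using hpS⟩

def IsSplittingRoot (ξ β : EuclideanSpace ℝ (Fin 8)) : Prop :=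
  IsE8Root β ∧ IsE8Root (ξ - deltaE8 - β) ∧ ⟪β, deltaE8⟫ = -1 ∧ ⟪β, ξ⟫ = 1

lemma isSplittingRoot_single_add_single_neg_one {ξ : EuclideanSpace ℝ (Fin 8)} {p t t' : Fin 8}
    (hδ : deltaE8 = single t 1 + single t' 1) (htt' : t ≠ t') (hpt : p ≠ t) (hpt' : p ≠ t')
    {a : ℝ} (ha : a = 1 ∨ a = -1) (hξ : a * ξ p - ξ t = 1)
    (hγ : IsE8Root (ξ - single p a - single t' 1)) :
    IsSplittingRoot ξ (single p a + single t (-1)) := by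
  refine ⟨isE8Root_single_add_single hpt ha (Or.inr rfl), ?_, ?_, ?_⟩
  · convert hγ using 1
    simp only [hδ, PiLp.single_neg]
    abel
  · rw [hδ]
    simp [inner_add_left, inner_add_right, inner_single_left, hpt, hpt', htt']
  · simp only [inner_add_left, inner_single_left, conj_trivial]
    linarith

lemma isSplittingRoot_off_deltaE8 {i j : Fin 8} (hij : i ≠ j) (hi6 : i ≠ 6) (hi7 : i ≠ 7)
    (hj6 : j ≠ 6) (hj7 : j ≠ 7) {a b : ℝ} (ha : a = 1 ∨ a = -1) (hb : b = 1 ∨ b = -1) :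
    IsSplittingRoot (single i a + single j b) (single i a + single 7 (-1)) := by
  refine isSplittingRoot_single_add_single_neg_one (add_comm _ _) (by decide) hi7 hi6 ha ?_ ?_
  · rcases ha with rfl | rfl <;> norm_num [hij, hi7.symm, hj7.symm]
  · have hγ : single i a + single j b - single i a - single 6 1 = single j b + single 6 (-1) := by
      simp only [PiLp.single_neg]
      abel
    rw [hγ]
    exact isE8Root_single_add_single hj6 hb (Or.inr rfl)

lemma isSplittingRoot_on_deltaE8 {t t' : Fin 8} (hδ : deltaE8 = single t 1 + single t' 1)
    (htt' : t ≠ t') (h0t : 0 ≠ t) (h0t' : 0 ≠ t') :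
    IsSplittingRoot (single t' 1 + single t (-1)) (single 0 1 + single t (-1)) := by
  refine isSplittingRoot_single_add_single_neg_one hδ htt' h0t h0t' (Or.inl rfl) ?_ ?_
  · simp [h0t, h0t', htt']
  · have hγ : single t' 1 + single t (-1) - single 0 1 - single t' 1 =
        single 0 (-1) + single t (-1 : ℝ) := by
      simp only [PiLp.single_neg]
      abel
    rw [hγ]
    exact isE8Root_single_add_single h0t (Or.inr rfl) (Or.inr rfl)

lemma exists_isSplittingRoot_of_integral {ξ : EuclideanSpace ℝ (Fin 8)}
    (hcoord : ∀ k, ξ k = 1 ∨ ξ k = -1 ∨ ξ k = 0)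
    (hcard : (Finset.univ.filter fun k => ξ k ≠ 0).card = 2) (h67 : ξ 6 + ξ 7 = 0) :
    ∃ β, IsSplittingRoot ξ β := by
  have hunit : ∀ k, ξ k ≠ 0 → ξ k = 1 ∨ ξ k = -1 := fun k hk => by
    rcases hcoord k with h | h | h <;> tauto
  by_cases h6 : ξ 6 = 0
  · obtain ⟨i, j, hij, hS⟩ := Finset.card_eq_two.mp hcard
    have hsupp : ∀ k, ξ k ≠ 0 ↔ k = i ∨ k = j := fun k => by
      simpa using Finset.ext_iff.mp hS k
    have h7 : ξ 7 = 0 := by linarith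
    have hi : ξ i ≠ 0 := (hsupp i).2 (Or.inl rfl)
    have hj : ξ j ≠ 0 := (hsupp j).2 (Or.inr rfl)
    rw [eq_single_add_single_of_support hij fun k => (hsupp k).1]
    exact ⟨_, isSplittingRoot_off_deltaE8 hij (by rintro rfl; exact hi h6)
      (by rintro rfl; exact hi h7) (by rintro rfl; exact hj h6) (by rintro rfl; exact hj h7)
      (hunit i hi) (hunit j hj)⟩
  · have h7 : ξ 7 ≠ 0 := fun h => h6 (by linarith)
    have hS : {6, 7} = Finset.univ.filter fun k => ξ k ≠ 0 :=
      Finset.eq_of_subset_of_card_le (by simp [Finset.insert_subset_iff, h6, h7])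
        (by rw [hcard]; rfl)
    have hξ : ξ = single 6 (ξ 6) + single 7 (ξ 7) :=
      eq_single_add_single_of_support (by decide) fun k hk => by
        simpa using (Finset.ext_iff.mp hS k).2 (by simpa using hk)
    rw [hξ]
    rcases hunit 6 h6 with h | h
    · rw [h, show ξ 7 = -1 by linarith]
      exact ⟨_, isSplittingRoot_on_deltaE8 (add_comm _ _) (by decide) (by decide) (by decide)⟩
    · rw [h, show ξ 7 = 1 by linarith, add_comm]
      exact ⟨_, isSplittingRoot_on_deltaE8 rfl (by decide) (by decide) (by decide)⟩

lemma exists_isSplittingRoot_of_half_integral {ξ : EuclideanSpace ℝ (Fin 8)}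
    (hcoord : ∀ k, ξ k = 1 / 2 ∨ ξ k = -1 / 2)
    (heven : Even (Finset.univ.filter fun k => ξ k = -1 / 2).card) (h67 : ξ 6 + ξ 7 = 0) :
    ∃ β, IsSplittingRoot ξ β := by
  obtain ⟨t, t', hδ, htt', ht, ht'⟩ : ∃ t t' : Fin 8, deltaE8 = single t 1 + single t' 1 ∧
      t ≠ t' ∧ ξ t = -1 / 2 ∧ ξ t' = 1 / 2 := by
    rcases hcoord 6 with h | h
    · exact ⟨7, 6, add_comm _ _, by decide, by linarith, h⟩
    · exact ⟨6, 7, rfl, by decide, h, by linarith⟩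
  obtain ⟨p, hpt, hp⟩ := exists_ne_eq_neg_half heven ht
  have hpt' : p ≠ t' := by rintro rfl; linarith
  refine ⟨_, isSplittingRoot_single_add_single_neg_one hδ htt' hpt hpt' (Or.inr rfl)
    (by rw [hp, ht]; norm_num) ?_⟩
  convert isE8Root_add_single_sub_single hcoord heven hp ht' using 2
  simp only [PiLp.single_neg, sub_neg_eq_add]

lemma IsE8Root.exists_isSplittingRoot {ξ : EuclideanSpace ℝ (Fin 8)} (hξ : IsE8Root ξ)
    (hξδ : ⟪ξ, deltaE8⟫ = 0) : ∃ β, IsSplittingRoot ξ β := by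
  rw [inner_deltaE8] at hξδ
  rcases hξ with ⟨hcoord, hcard⟩ | ⟨hcoord, heven⟩
  exacts [exists_isSplittingRoot_of_integral hcoord hcard hξδ,
    exists_isSplittingRoot_of_half_integral hcoord heven hξδ]

/-- In the lattice `Pic X' = ℤ⟨χ₀⟩ ⊕ (E7 weight lattice)` of a degree-2 del
Pezzo surface, with exceptional classes `ℓ_μ` indexed by the 56 weights `μ` of the minuscule
`E7`-representation and intersection numbers `(ℓ_μ · ℓ_ν) = 1/2 − (μ, ν)`: every `E7` root `ξ`
(i.e. every weight of the adjoint representation with `ξ ≠ 0`) can be written as `ξ = μ + ν`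
with `μ, ν` weights of the 56-dimensional representation satisfying `(ℓ_μ · ℓ_ν) = 1`, i.e.
`(μ, ν) = −1/2`.  Concretely, with `E7 = {ξ ∈ E8 : (ξ, δ) = 0}` and the weights realized as
`μ = β + δ/2` for `E8` roots `β` with `(β, δ) = −1`. -/
theorem statement_13 (ξ : EuclideanSpace ℝ (Fin 8))
    (hξ : IsE8Root ξ) (hξE7 : ⟪ξ, deltaE8⟫ = 0) :
    ∃ β γ : EuclideanSpace ℝ (Fin 8),
      IsE8Root β ∧ IsE8Root γ ∧
      ⟪β, deltaE8⟫ = -1 ∧ ⟪γ, deltaE8⟫ = -1 ∧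
      ξ = (β + (1 / 2 : ℝ) • deltaE8) + (γ + (1 / 2 : ℝ) • deltaE8) ∧
      ⟪β + (1 / 2 : ℝ) • deltaE8, γ + (1 / 2 : ℝ) • deltaE8⟫ = -(1 / 2) := by
  obtain ⟨β, hβ, hγ, hβδ, hβξ⟩ := hξ.exists_isSplittingRoot hξE7
  exact ⟨β, ξ - deltaE8 - β, hβ, hγ, hβδ,
    inner_sub_sub_left_eq_neg_one inner_deltaE8_self hξE7 hβδ, by module,
    inner_add_half_smul_sub_sub_add_half_smul inner_deltaE8_self hξE7 hβ.inner_self hβδ hβξ⟩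
end

section
/- Let ρ(x) = Σ_{μ1+μ2+μ3=β} c_{μ1,μ2,μ3} x^{μ1} x^{μ2} x^{μ3} be a nonzero cubic form of weight β ∈ Λ on the 56-dimensional E7-module g_{-1} (Λ the set of weights), and suppose c_{μ1,μ2,μ3} = 0 whenever some μ_i = β. Decompose g_{-1} under the E6 Levi subalgebra g'' fixing the hyperplane x^β = 0 as W_{-3} ⊕ W_{-1} ⊕ W_1 ⊕ W_3 with dim W_{±3} = 1, dim W_{±1} = 27. Then ρ belongs to S³(W_1*), i.e., ρ(x) = ρ(φ(x)) where φ: g_{-1} → W_1 is the projection; hence ρ does not vanish identically on the affine cone (G'/P')_a, since φ((G'/P')_a) = W_1. -/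
/-- Let `ρ` be a nonzero cubic form of weight `β ∈ Λ` on the 56-dimensional
`E7`-module `g_{-1}` (given by a symmetric trilinear form `T`, `ρ x = T x x x`), and suppose
that all coefficients `c_{μ₁,μ₂,μ₃}` with some `μᵢ = β` vanish, i.e. `ρ` does not involve the
coordinate `x^β` (hypothesis `hnoβ`).  Decompose `g_{-1}` under the `E6` Levi subalgebra fixing
the hyperplane `x^β = 0` as `W_{-3} ⊕ W_{-1} ⊕ W_1 ⊕ W_3` with `dim W_{±3} = 1`,
`dim W_{±1} = 27`, `X_β` spanning `W_3`; the decomposition is encoded by the projections `π i`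
(`i ∈ {−3, −1, 1, 3}`), and the central element `h` acting with eigenvalue `i` on `W_i` is
encoded by the scaling operators `t ↦ Σ tⁱ • π i`; `ρ` has `h`-weight `3` (hypothesis
`hweight`).  Then `ρ ∈ S³(W_1^*)`, i.e. `ρ(x) = ρ(π₁ x)` for all `x`; hence `ρ` does not vanish
identically on the affine cone `(G'/P')_a =: C`, since `π₁(C) = W_1`. -/
theorem statement_19 {k V : Type*} [Field k] [CharZero k]
    [AddCommGroup V] [Module k V] [FiniteDimensional k V]
    (π : ℤ → (V →ₗ[k] V))
    (hπsum : π (-3) + π (-1) + π 1 + π 3 = LinearMap.id)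
    (hπorth : ∀ i ∈ ({-3, -1, 1, 3} : Set ℤ), ∀ j ∈ ({-3, -1, 1, 3} : Set ℤ),
      (π i).comp (π j) = if i = j then π i else 0)
    (Xβ : V) (hXβ : Xβ ≠ 0) (hXβW3 : π 3 Xβ = Xβ)
    (hW3dim : ∀ u : V, π 3 u ∈ Submodule.span k {Xβ})
    (T : V →ₗ[k] V →ₗ[k] V →ₗ[k] k)
    (hTsymm : ∀ x y z : V, T x y z = T y x z ∧ T x y z = T x z y)
    (ρ : V → k) (hρ : ∀ x : V, ρ x = T x x x)
    (hρne : ∃ x : V, ρ x ≠ 0)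
    (hweight : ∀ (t : kˣ) (x : V),
      ρ ((((t : k) ^ (-3 : ℤ)) • π (-3) + ((t : k) ^ (-1 : ℤ)) • π (-1)
          + ((t : k) ^ (1 : ℤ)) • π 1 + ((t : k) ^ (3 : ℤ)) • π 3) x)
        = (t : k) ^ 3 * ρ x)
    (hnoβ : ∀ (x : V) (s : k), ρ (x + s • Xβ) = ρ x)
    (C : Set V)
    (hC : π 1 '' C = (LinearMap.range (π 1) : Submodule k V)) :
    (∀ x : V, ρ x = ρ (π 1 x)) ∧ ∃ y ∈ C, ρ y ≠ 0 := by

  classical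
  have hs1 : ∀ a b c : V, T a b c = T b a c := fun a b c => (hTsymm a b c).1
  have hs2 : ∀ a b c : V, T a b c = T a c b := fun a b c => (hTsymm a b c).2
  have hexp3 : ∀ (α β γ : k) (p q r : V),
      T (α•p + β•q + γ•r) (α•p + β•q + γ•r) (α•p + β•q + γ•r)
        = α^3*T p p p + 3*α^2*β*T p p q + 3*α^2*γ*T p p r + 3*α*β^2*T p q q
          + 6*α*β*γ*T p q r + 3*α*γ^2*T p r r + β^3*T q q q + 3*β^2*γ*T q q r
          + 3*β*γ^2*T q r r + γ^3*T r r r := by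
    intro α β γ p q r
    have hA : ∀ a b : V, T a b a = T a a b := fun a b => hs2 a b a
    have hB : ∀ a b : V, T b a a = T a a b := fun a b => (hs1 b a a).trans (hA a b)
    have hCl : ∀ a b : V, T b a b = T a b b := fun a b => hs1 b a b
    have hD : ∀ a b : V, T b b a = T a b b := fun a b => (hs2 b b a).trans (hCl a b)
    have m1 : T p r q = T p q r := hs2 p r q
    have m2 : T q p r = T p q r := hs1 q p r
    have m3 : T q r p = T p q r := (hs2 q r p).trans m2
    have m4 : T r p q = T p q r := (hs1 r p q).trans m1
    have m5 : T r q p = T p q r := (hs2 r q p).trans m4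
    simp only [map_add, map_smul, LinearMap.add_apply, LinearMap.smul_apply, smul_eq_mul]
    rw [hB p q, hA p q, hB p r, hA p r, hB q r, hA q r, hCl p q, hD p q,
        hCl p r, hD p r, hCl q r, hD q r, m1, m2, m3, m4, m5]
    ring
  have hscal : ∀ (c : k) (y : V), ρ (c • y) = c^3 * ρ y := by
    intro c y
    rw [hρ, hρ]
    simp only [map_smul, LinearMap.smul_apply, smul_eq_mul]
    ring
  have main : ∀ x : V, ρ x = ρ (π 1 x) := by
    intro x
    obtain ⟨sz, hsz⟩ : ∃ s : k, π 3 x = s • Xβ := by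
      have h := hW3dim x
      rw [Submodule.mem_span_singleton] at h
      obtain ⟨c, hc⟩ := h
      exact ⟨c, hc.symm⟩
    set P : Polynomial k :=
      Polynomial.C (T (π (-3) x) (π (-3) x) (π (-3) x))
      + Polynomial.C (3 * T (π (-3) x) (π (-3) x) (π (-1) x)) * Polynomial.X^2
      + Polynomial.C (3 * T (π (-3) x) (π (-3) x) (π 1 x)
          + 3 * T (π (-3) x) (π (-1) x) (π (-1) x)) * Polynomial.X^4
      + Polynomial.C (6 * T (π (-3) x) (π (-1) x) (π 1 x)
          + T (π (-1) x) (π (-1) x) (π (-1) x)) * Polynomial.X^6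
      + Polynomial.C (3 * T (π (-3) x) (π 1 x) (π 1 x)
          + 3 * T (π (-1) x) (π (-1) x) (π 1 x)) * Polynomial.X^8
      + Polynomial.C (3 * T (π (-1) x) (π 1 x) (π 1 x)) * Polynomial.X^10
      + Polynomial.C (T (π 1 x) (π 1 x) (π 1 x) - ρ x) * Polynomial.X^12 with hPdef
    have hroot : ∀ a : k, a ≠ 0 → P.IsRoot a := by
      intro a ha
      have hw := hweight (Units.mk0 a ha) x
      simp only [Units.val_mk0, LinearMap.add_apply, LinearMap.smul_apply] at hw
      have key : ρ ((1:k) • π (-3) x + (a^2) • π (-1) x + (a^4) • π 1 x) = a^12 * ρ x := by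
        have e1 : (a:k)^(3:ℤ) • (a^(-3:ℤ) • π (-3) x) = (1:k) • π (-3) x := by
          rw [smul_smul, ← zpow_add₀ ha]; norm_num
        have e2 : (a:k)^(3:ℤ) • (a^(-1:ℤ) • π (-1) x) = (a^2) • π (-1) x := by
          rw [smul_smul, ← zpow_add₀ ha, show (3:ℤ) + -1 = 2 by norm_num, zpow_ofNat]
        have e3 : (a:k)^(3:ℤ) • (a^(1:ℤ) • π 1 x) = (a^4) • π 1 x := by
          rw [smul_smul, ← zpow_add₀ ha, show (3:ℤ) + 1 = 4 by norm_num, zpow_ofNat]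
        have e4 : (a:k)^(3:ℤ) • (a^(3:ℤ) • π 3 x) = (a^6 * sz) • Xβ := by
          rw [hsz, smul_smul, smul_smul, ← zpow_add₀ ha, show (3:ℤ) + 3 = 6 by norm_num,
            zpow_ofNat]
        calc ρ ((1:k) • π (-3) x + (a^2) • π (-1) x + (a^4) • π 1 x)
            = ρ ((1:k) • π (-3) x + (a^2) • π (-1) x + (a^4) • π 1 x + (a^6*sz) • Xβ) :=
              (hnoβ _ _).symm
          _ = ρ ((a:k)^(3:ℤ) • (a^(-3:ℤ) • π (-3) x + a^(-1:ℤ) • π (-1) x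
                + a^(1:ℤ) • π 1 x + a^(3:ℤ) • π 3 x)) := by
              rw [smul_add, smul_add, smul_add, e1, e2, e3, e4]
          _ = ((a:k)^(3:ℤ))^3 * ρ (a^(-3:ℤ) • π (-3) x + a^(-1:ℤ) • π (-1) x
                + a^(1:ℤ) • π 1 x + a^(3:ℤ) • π 3 x) := hscal _ _
          _ = a^12 * ρ x := by
              rw [hw, zpow_ofNat]
              ring
      rw [hρ, hexp3] at key
      show P.eval a = 0
      rw [hPdef]
      simp only [Polynomial.eval_add, Polynomial.eval_mul, Polynomial.eval_pow,
        Polynomial.eval_C, Polynomial.eval_X]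
      linear_combination key
    have hP0 : P = 0 := by
      apply Polynomial.eq_zero_of_infinite_isRoot
      have hfin : ({0} : Set k).Finite := Set.finite_singleton 0
      have hinf := hfin.infinite_compl
      exact hinf.mono (fun a ha => hroot a (by simpa using ha))
    have hcoeff := congrArg (fun q : Polynomial k => q.coeff 12) hP0
    rw [hPdef] at hcoeff
    simp only [Polynomial.coeff_add, Polynomial.coeff_C_mul, Polynomial.coeff_X_pow,
      Polynomial.coeff_C, Polynomial.coeff_zero] at hcoeff
    norm_num at hcoeff
    rw [hρ (π 1 x)]
    linear_combination -hcoeff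
  refine ⟨main, ?_⟩
  obtain ⟨x0, hx0⟩ := hρne
  have hmem : π 1 x0 ∈ π 1 '' C := by
    rw [hC]
    exact LinearMap.mem_range_self (π 1) x0
  obtain ⟨y, hyC, hy⟩ := hmem
  refine ⟨y, hyC, ?_⟩
  rw [main y, hy, ← main x0]
  exact hx0
end
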